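/- Let R = GR(4, 4^r), ξ ∈ R of multiplicative order 2^r − 1, G₁ = ⟨ξ⟩, and T : R → Z/4Z the trace map T(x) = x + φ(x) + ... + φ^{r−1}(x) relative to the Frobenius φ. Let ω = i be a primitive 4th root of unity and for γ ∈ R set ζ_γ = Σ_{s∈G₁} ω^{T(γs)}. Then for every unit γ ∈ R^*, |1 + ζ_γ|² = 2^r; in particular 2^{r/2} − 1 ≤ |ζ_γ| ≤ 2^{r/2} + 1. -/

import Mathlib

/-!
Let `F = R/2R`, a field with `2^r` elements, and let `τ : F → R` be the Teichmüller lift. Since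
`ξ mod 2` generates `F^*`, the lift maps `F` onto `{0} ∪ ⟨ξ⟩`, so `1 + ζ_γ = ∑_{α ∈ F} χ(γ τ α)`
for the additive character `χ = i^T` of `R`. Squaring in characteristic `2` gives the addition
rule `τ(α + β) = τ α + τ β + 2 τ(√(αβ))`, and substituting `α = u + β` in
`|∑_α χ(γ τ α)|² = ∑_{α,β} χ(γ τ α - γ τ β)` yields `∑_u χ(γ τ u) ∑_β Ψ(√(uβ))`, where
`Ψ v = χ(2 γ τ v)` is an additive character of `F`. It is nontrivial because `T` takes an odd
value: modulo `2` the trace is `α ↦ ∑_{i<r} α^{2^i}`, a polynomial of degree `2^{r-1} < |F|`.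
Hence only `u = 0` contributes and `|1 + ζ_γ|² = |F| = 2^r`.
-/

open IsLocalRing Finset

section LocalRing

variable {R : Type*} [CommRing R]

theorem IsLocalRing.of_forall_not_isUnit_iff_mem {I : Ideal R} (h : ∀ x, ¬IsUnit x ↔ x ∈ I) :
    IsLocalRing R :=
  have : Nontrivial R := nontrivial_of_ne 0 1 (isUnit_zero_iff.not.mp ((h 0).mpr I.zero_mem))
  .of_nonunits_add fun a b ha hb => (h _).mpr (I.add_mem ((h a).mp ha) ((h b).mp hb))

variable [IsLocalRing R]

theorem IsLocalRing.maximalIdeal_eq_of_forall_not_isUnit_iff_mem {I : Ideal R}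
    (h : ∀ x, ¬IsUnit x ↔ x ∈ I) : maximalIdeal R = I :=
  Ideal.ext fun x => (mem_maximalIdeal x).trans (h x)

instance IsLocalRing.ResidueField.finite [Finite R] : Finite (ResidueField R) :=
  Finite.of_surjective _ residue_surjective

theorem exists_eq_add_two_mul_of_residue_eq (hm : maximalIdeal R = Ideal.span {2}) {x y : R}
    (h : residue R x = residue R y) : ∃ c, x = y + 2 * c := by
  rw [← sub_eq_zero, ← map_sub, residue_eq_zero_iff, hm, Ideal.mem_span_singleton'] at h
  obtain ⟨c, hc⟩ := h
  exact ⟨c, by rw [mul_comm, hc]; ring⟩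

theorem residue_iterate_eq_pow (φ : R ≃+* R) {ξ : R} (hφ : φ ξ = ξ ^ 2)
    (hgen : ∀ α : ResidueField R, α = 0 ∨ ∃ k : ℕ, α = residue R ξ ^ k) (i : ℕ) (x : R) :
    residue R (φ^[i] x) = residue R x ^ 2 ^ i := by
  have hsq (y : R) : residue R (φ y) = residue R y ^ 2 := by
    change ResidueField.mapEquiv φ (residue R y) = _
    rcases hgen (residue R y) with h | ⟨k, h⟩ <;> rw [h]
    · simp
    · rw [map_pow]
      change residue R (φ ξ) ^ k = _
      rw [hφ, map_pow, ← pow_mul, ← pow_mul, mul_comm]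
  induction i with
  | zero => simp
  | succ i ih => rw [Function.iterate_succ_apply', hsq, ih, ← pow_mul, ← pow_succ]

end LocalRing

section CharFour

variable {R : Type*} [CommRing R] [IsLocalRing R] [CharP R 4]

theorem residue_eq_of_two_mul_eq {x y : R} (h : 2 * x = 2 * y) : residue R x = residue R y := by
  rw [← sub_eq_zero, ← map_sub, residue_eq_zero_iff, mem_maximalIdeal, mem_nonunits_iff]
  intro hu
  have h2 : (2 : R) * (x - y) = 0 := by rw [mul_sub, h, sub_self]
  have : ((2 : ℕ) : R) = 0 := by simpa using (hu.mul_left_eq_zero).mp h2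
  rw [CharP.cast_eq_zero_iff R 4] at this
  norm_num at this

instance IsLocalRing.ResidueField.charP_two : CharP (ResidueField R) 2 := by
  refine (CharP.charP_iff_prime_eq_zero Nat.prime_two).mpr ?_
  have h : (2 : R) * 2 = 2 * 0 := by rw [mul_zero]; exact_mod_cast CharP.ofNat_eq_zero R 4
  have := residue_eq_of_two_mul_eq h
  rwa [map_zero, map_ofNat] at this

theorem odd_card_residueField_sub_one [Fintype (ResidueField R)] :
    Odd (Fintype.card (ResidueField R) - 1) := by
  have heven := FiniteField.even_card_of_char_two (ringChar.eq (ResidueField R) 2)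
  have hpos := Fintype.card_pos (α := ResidueField R)
  rw [Nat.odd_iff]
  omega

variable (hm : maximalIdeal R = Ideal.span {2})
include hm

theorem two_mul_eq_two_mul_of_residue_eq {x y : R} (h : residue R x = residue R y) :
    2 * x = 2 * y := by
  obtain ⟨c, rfl⟩ := exists_eq_add_two_mul_of_residue_eq hm h
  linear_combination c * CharP.ofNat_eq_zero R 4

theorem sq_eq_sq_of_residue_eq {x y : R} (h : residue R x = residue R y) : x ^ 2 = y ^ 2 := by
  obtain ⟨c, rfl⟩ := exists_eq_add_two_mul_of_residue_eq hm h
  linear_combination (y * c + c ^ 2) * CharP.ofNat_eq_zero R 4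

theorem orderOf_residue_of_odd {ξ : R} (hξ : Odd (orderOf ξ)) :
    orderOf (residue R ξ) = orderOf ξ := by
  refine Nat.dvd_antisymm (orderOf_map_dvd _ ξ) ?_
  have hsq : (ξ ^ orderOf (residue R ξ)) ^ 2 = 1 ^ 2 :=
    sq_eq_sq_of_residue_eq hm (by rw [map_pow, pow_orderOf_eq_one, map_one])
  rw [one_pow, ← pow_mul, mul_comm] at hsq
  exact (Nat.coprime_two_left.mpr hξ).symm.dvd_of_dvd_mul_left (orderOf_dvd_of_pow_eq_one hsq)

-- Multiplication by `2` has kernel and image both equal to `2R`, so `|R| = |R/2R| * |2R| = |F|²`.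
theorem card_eq_card_residueField_sq [Finite R] : Nat.card R = Nat.card (ResidueField R) ^ 2 := by
  let double := LinearMap.mulLeft R (2 : R)
  have hker : LinearMap.ker double = maximalIdeal R := by
    ext x
    rw [LinearMap.mem_ker, ← residue_eq_zero_iff, LinearMap.mulLeft_apply]
    exact ⟨fun h => residue_eq_of_two_mul_eq (h.trans (mul_zero 2).symm) |>.trans (map_zero _),
      fun h => (two_mul_eq_two_mul_of_residue_eq hm (h.trans (map_zero _).symm)).trans (mul_zero 2)⟩
  have hrange : LinearMap.range double = maximalIdeal R := by
    ext x
    rw [hm, Ideal.mem_span_singleton', LinearMap.mem_range]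
    simp only [double, LinearMap.mulLeft_apply, mul_comm]
  have := Nat.card_congr ((Submodule.quotEquivOfEq _ _ hker).symm.trans double.quotKerEquivRange
    |>.trans (LinearEquiv.ofEq _ _ hrange)).toEquiv
  rw [Submodule.card_eq_card_quotient_mul_card (maximalIdeal R), ← this, sq]
  rfl

theorem card_residueField_eq_two_pow [Fintype R] [Fintype (ResidueField R)] {r : ℕ}
    (hcard : Fintype.card R = 4 ^ r) : Fintype.card (ResidueField R) = 2 ^ r := by
  have h := card_eq_card_residueField_sq hm
  rw [Nat.card_eq_fintype_card, hcard, Nat.card_eq_fintype_card,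
    show 4 ^ r = (2 ^ r) ^ 2 by rw [← pow_mul, mul_comm, pow_mul]; norm_num] at h
  exact (Nat.pow_left_injective two_ne_zero h).symm

end CharFour

section Teichmuller

variable {R : Type*} [CommRing R] [IsLocalRing R] [CharP R 4] [Finite R]

/-- The square of a lift of `√α`; when the maximal ideal is `2R` it does not depend on the lift,
since `(x + 2c)² = x²`. -/
noncomputable def teichmuller (α : ResidueField R) : R :=
  Function.surjInv residue_surjective ((frobeniusEquiv (ResidueField R) 2).symm α) ^ 2

theorem residue_teichmuller (α : ResidueField R) : residue R (teichmuller α) = α := by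
  rw [teichmuller, map_pow, Function.surjInv_eq residue_surjective, frobeniusEquiv_symm_pow_p]

theorem exists_residue_sq_eq (α : ResidueField R) : ∃ x, residue R x ^ 2 = α :=
  ⟨_, residue_teichmuller α⟩

variable (hm : maximalIdeal R = Ideal.span {2})
include hm

theorem teichmuller_residue_sq (x : R) : teichmuller (residue R x ^ 2) = x ^ 2 := by
  refine sq_eq_sq_of_residue_eq hm ?_
  rw [Function.surjInv_eq residue_surjective]
  exact frobeniusEquiv_symm_apply_frobenius _ 2 (residue R x)

theorem teichmuller_zero : teichmuller (0 : ResidueField R) = 0 := by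
  simpa using teichmuller_residue_sq hm 0

theorem teichmuller_residue_of_pow_eq_one {x : R} {n : ℕ} (hn : Odd n) (hx : x ^ n = 1) :
    teichmuller (residue R x) = x := by
  obtain ⟨m, rfl⟩ := hn
  have hsq : (x ^ (m + 1)) ^ 2 = x := by
    rw [← pow_mul, show (m + 1) * 2 = (2 * m + 1) + 1 by ring, pow_succ, hx, one_mul]
  rw [← hsq, map_pow, teichmuller_residue_sq hm]

theorem teichmuller_add (α β : ResidueField R) :
    teichmuller (α + β) = teichmuller α + teichmuller β
      + 2 * teichmuller ((frobeniusEquiv (ResidueField R) 2).symm (α * β)) := by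
  obtain ⟨x, rfl⟩ := exists_residue_sq_eq α
  obtain ⟨y, rfl⟩ := exists_residue_sq_eq β
  have hsqrt : (frobeniusEquiv (ResidueField R) 2).symm (residue R x ^ 2 * residue R y ^ 2)
      = residue R (x * y) := by
    rw [← mul_pow, ← map_mul]
    exact frobeniusEquiv_symm_apply_frobenius _ 2 _
  rw [← add_pow_char, ← map_add, hsqrt, teichmuller_residue_sq hm, teichmuller_residue_sq hm,
    teichmuller_residue_sq hm,
    two_mul_eq_two_mul_of_residue_eq hm (residue_teichmuller (residue R (x * y)))]
  ring

theorem two_mul_teichmuller_add (α β : ResidueField R) :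
    2 * teichmuller (α + β) = 2 * teichmuller α + 2 * teichmuller β := by
  rw [teichmuller_add hm]
  linear_combination (teichmuller ((frobeniusEquiv (ResidueField R) 2).symm (α * β)))
    * CharP.ofNat_eq_zero R 4

end Teichmuller

section FiniteField

variable {K : Type*} [Field K] [Fintype K]

theorem image_pow_range_eq_univ_erase_zero [DecidableEq K] {ζ : K}
    (hζ : orderOf ζ = Fintype.card K - 1) :
    (range (Fintype.card K - 1)).image (ζ ^ ·) = univ.erase 0 := by
  have hN : 0 < Fintype.card K - 1 := Nat.sub_pos_of_lt Fintype.one_lt_card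
  have hζ0 : ζ ≠ 0 := by
    rintro rfl
    simpa [hζ, hN.ne'] using pow_orderOf_eq_one (0 : K)
  refine eq_of_subset_of_card_le (fun α hα => ?_) ?_
  · obtain ⟨k, -, rfl⟩ := mem_image.mp hα
    exact mem_erase.mpr ⟨pow_ne_zero k hζ0, mem_univ _⟩
  · rw [card_erase_of_mem (mem_univ 0), card_univ, card_image_of_injOn, card_range]
    rw [coe_range, ← hζ]
    exact pow_injOn_Iio_orderOf

theorem Fintype.sum_eq_add_sum_range_pow {M : Type*} [AddCommMonoid M] {ζ : K}
    (hζ : orderOf ζ = Fintype.card K - 1) (g : K → M) :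
    ∑ α, g α = g 0 + ∑ k ∈ range (Fintype.card K - 1), g (ζ ^ k) := by
  classical
  rw [← add_sum_erase _ _ (mem_univ 0), ← image_pow_range_eq_univ_erase_zero hζ, sum_image]
  rw [coe_range, ← hζ]
  exact pow_injOn_Iio_orderOf

theorem eq_zero_or_exists_eq_pow {ζ : K} (hζ : orderOf ζ = Fintype.card K - 1) (α : K) :
    α = 0 ∨ ∃ k : ℕ, α = ζ ^ k := by
  classical
  refine or_iff_not_imp_left.mpr fun hα => ?_
  obtain ⟨k, -, hk⟩ := mem_image.mp
    ((image_pow_range_eq_univ_erase_zero hζ).symm ▸ mem_erase.mpr ⟨hα, mem_univ α⟩)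
  exact ⟨k, hk.symm⟩

open Polynomial in
theorem exists_sum_pow_two_pow_ne_zero {r : ℕ} (hr : r ≠ 0) (hK : 2 ^ (r - 1) < Fintype.card K) :
    ∃ a : K, ∑ i ∈ range r, a ^ 2 ^ i ≠ 0 := by
  by_contra! h
  let P : K[X] := ∑ i ∈ range r, X ^ 2 ^ i
  have hP : P.coeff 1 = 1 := by
    simp_rw [P, finsetSum_coeff, coeff_X_pow, eq_comm (a := 1), Nat.pow_eq_one]
    simp [Nat.pos_of_ne_zero hr]
  have hdeg : P.natDegree ≤ 2 ^ (r - 1) :=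
    natDegree_sum_le_of_forall_le _ _ fun i hi => by
      rw [natDegree_X_pow]
      exact Nat.pow_le_pow_right two_pos (by have := mem_range.mp hi; omega)
  have hP0 : P = 0 := eq_zero_of_natDegree_lt_card_of_eval_eq_zero P Function.injective_id
    (fun a => by simp [P, eval_finsetSum, h a]) (hdeg.trans_lt hK)
  simp [hP0] at hP

end FiniteField

theorem exists_residue_sum_iterate_ne_zero {R : Type*} [CommRing R] [IsLocalRing R]
    [Fintype (ResidueField R)] (φ : R ≃+* R) {ξ : R} (hφ : φ ξ = ξ ^ 2)
    (hξ : orderOf (residue R ξ) = Fintype.card (ResidueField R) - 1) {r : ℕ} (hr : r ≠ 0)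
    (hF : Fintype.card (ResidueField R) = 2 ^ r) :
    ∃ x, residue R (∑ i ∈ range r, φ^[i] x) ≠ 0 := by
  obtain ⟨a, ha⟩ := exists_sum_pow_two_pow_ne_zero hr
    (by rw [hF]; exact Nat.pow_lt_pow_right one_lt_two (by omega))
  obtain ⟨x, rfl⟩ := residue_surjective a
  refine ⟨x, ?_⟩
  rwa [map_sum, sum_congr rfl fun i _ =>
    residue_iterate_eq_pow φ hφ (eq_zero_or_exists_eq_pow hξ) i x]

section CharacterSum

variable {R : Type*} [CommRing R] [IsLocalRing R] [CharP R 4] [Finite R] [Fintype (ResidueField R)]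
  (hm : maximalIdeal R = Ideal.span {2})
include hm

open ComplexConjugate in
theorem norm_sq_sum_teichmuller (χ : AddChar R ℂ) (hχ : ∃ x, χ (2 * x) ≠ 1) :
    ‖∑ α, χ (teichmuller α)‖ ^ 2 = Fintype.card (ResidueField R) := by
  let sqrt := (frobeniusEquiv (ResidueField R) 2).symm
  let Ψ : AddChar (ResidueField R) ℂ :=
    χ.compAddMonoidHom (.mk' (fun v => 2 * teichmuller v) (two_mul_teichmuller_add hm))
  have hΨ : Ψ ≠ 1 := by
    obtain ⟨x, hx⟩ := hχ
    refine AddChar.ne_one_iff.mpr ⟨residue R x, ?_⟩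
    change χ (2 * teichmuller (residue R x)) ≠ 1
    rwa [two_mul_eq_two_mul_of_residue_eq hm (residue_teichmuller _)]
  have hinner (u : ResidueField R) (hu : u ≠ 0) : ∑ β, Ψ (sqrt (u * β)) = 0 :=
    (Fintype.sum_equiv ((Equiv.mulLeft₀ u hu).trans sqrt.toEquiv) _ Ψ fun _ => rfl).trans
      (AddChar.sum_eq_zero_of_ne_one hΨ)
  have hshift (u β : ResidueField R) : χ (teichmuller (u + β)) * χ (-teichmuller β)
      = χ (teichmuller u) * Ψ (sqrt (u * β)) := by
    change _ = χ (teichmuller u) * χ (2 * teichmuller ((frobeniusEquiv _ 2).symm (u * β)))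
    rw [← AddChar.map_add_eq_mul, ← AddChar.map_add_eq_mul, teichmuller_add hm]
    ring_nf
  have hmul : (∑ α, χ (teichmuller α)) * conj (∑ α, χ (teichmuller α))
      = Fintype.card (ResidueField R) := calc
    _ = ∑ β, ∑ α, χ (teichmuller α) * χ (-teichmuller β) := by
        simp only [map_sum, sum_mul_sum, AddChar.map_neg_eq_conj]
        exact sum_comm
    _ = ∑ β, ∑ u, χ (teichmuller u) * Ψ (sqrt (u * β)) := by
        refine sum_congr rfl fun β _ => ?_
        rw [← Fintype.sum_equiv (Equiv.addRight β) _ _ fun u => rfl]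
        exact sum_congr rfl fun u _ => hshift u β
    _ = ∑ u, χ (teichmuller u) * ∑ β, Ψ (sqrt (u * β)) := by
        rw [sum_comm]
        simp only [mul_sum]
    _ = Fintype.card (ResidueField R) := by
        rw [sum_eq_single 0 (fun u _ hu => by rw [hinner u hu, mul_zero]) (by simp)]
        simp [teichmuller_zero hm]
  rw [Complex.sq_norm]
  exact_mod_cast (Complex.mul_conj _).symm.trans hmul

theorem norm_sq_one_add_sum_range_orderOf {ξ : R}
    (hξ : orderOf ξ = Fintype.card (ResidueField R) - 1) (χ : AddChar R ℂ)
    (hχ : ∃ x, χ (2 * x) ≠ 1) :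
    ‖1 + ∑ k ∈ range (orderOf ξ), χ (ξ ^ k)‖ ^ 2 = Fintype.card (ResidueField R) := by
  have hodd : Odd (orderOf ξ) := hξ ▸ odd_card_residueField_sub_one
  have hteich (k : ℕ) : teichmuller (residue R (ξ ^ k)) = ξ ^ k :=
    teichmuller_residue_of_pow_eq_one hm hodd
      (by rw [← pow_mul, mul_comm, pow_mul, pow_orderOf_eq_one, one_pow])
  rw [← norm_sq_sum_teichmuller hm χ hχ,
    Fintype.sum_eq_add_sum_range_pow ((orderOf_residue_of_odd hm hodd).trans hξ),
    teichmuller_zero hm, AddChar.map_zero_eq_one, ← hξ]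
  simp only [← map_pow, hteich]

end CharacterSum

theorem Complex.I_pow_val_eq_one_iff (a : ZMod 4) : Complex.I ^ a.val = 1 ↔ a = 0 := by
  rw [Complex.isPrimitiveRoot_I.pow_eq_one_iff_dvd, ← ZMod.natCast_eq_zero_iff, ZMod.natCast_val,
    ZMod.cast_id]

theorem norm_bounds_of_norm_one_add_sq_eq {E : Type*} [SeminormedRing E] [NormOneClass E] {z : E}
    {r : ℕ} (h : ‖1 + z‖ ^ 2 = 2 ^ r) :
    (2 : ℝ) ^ ((r : ℝ) / 2) - 1 ≤ ‖z‖ ∧ ‖z‖ ≤ (2 : ℝ) ^ ((r : ℝ) / 2) + 1 := by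
  have hnorm : ‖1 + z‖ = (2 : ℝ) ^ ((r : ℝ) / 2) := by
    rw [← Real.sqrt_sq (norm_nonneg _), h, Real.sqrt_eq_rpow, ← Real.rpow_natCast,
      ← Real.rpow_mul zero_le_two]
    ring_nf
  constructor
  · linarith [norm_add_le 1 z, norm_one (α := E)]
  · have := norm_sub_le (1 + z) 1
    rw [add_sub_cancel_left, norm_one] at this
    linarith

/-- Boztas–Hammons–Kumar bound: in `R = GR(4, 4^r)` with Teichmüller element `ξ` of order
`2^r - 1`, Frobenius `φ` (with `φ ξ = ξ²`), trace `T x = x + φ x + ⋯ + φ^{r-1} x ∈ Z₄`, and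
`ζ_γ = Σ_{s ∈ G₁} i^{T(γ s)}`, every unit `γ` satisfies `|1 + ζ_γ|² = 2^r`; in particular
`2^{r/2} - 1 ≤ |ζ_γ| ≤ 2^{r/2} + 1`. -/
theorem stmt10 (r : ℕ)
    (R : Type) [CommRing R] [Fintype R] [CharP R 4]
    (hcard : Fintype.card R = 4 ^ r)
    (hlocal : ∀ x : R, ¬ IsUnit x ↔ x ∈ Ideal.span {(2 : R)})
    (ξ : R) (hξ : orderOf ξ = 2 ^ r - 1)
    (φ : R ≃+* R) (hφ : φ ξ = ξ ^ 2)
    (T : R → ZMod 4)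
    (hT : ∀ x : R, (ZMod.castHom (dvd_refl 4) R) (T x) = ∑ i ∈ Finset.range r, (⇑φ)^[i] x)
    (γ : R) (hγ : IsUnit γ) :
    ‖1 + ∑ k ∈ Finset.range (2 ^ r - 1), Complex.I ^ (T (γ * ξ ^ k)).val‖ ^ 2
        = 2 ^ r ∧
      (2 : ℝ) ^ ((r : ℝ) / 2) - 1
        ≤ ‖∑ k ∈ Finset.range (2 ^ r - 1), Complex.I ^ (T (γ * ξ ^ k)).val‖ ∧
      ‖∑ k ∈ Finset.range (2 ^ r - 1), Complex.I ^ (T (γ * ξ ^ k)).val‖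
        ≤ (2 : ℝ) ^ ((r : ℝ) / 2) + 1 := by
  have : IsLocalRing R := .of_forall_not_isUnit_iff_mem hlocal
  have hm := maximalIdeal_eq_of_forall_not_isUnit_iff_mem hlocal
  let : Fintype (ResidueField R) := .ofFinite _
  have hF := card_residueField_eq_two_pow hm hcard
  have hr : r ≠ 0 := by
    rintro rfl
    exact Fintype.one_lt_card.ne' hF
  have hord : orderOf ξ = Fintype.card (ResidueField R) - 1 := hF ▸ hξ
  have hTadd (x y : R) : T (x + y) = T x + T y :=
    ZMod.castHom_injective R (by simp only [map_add, hT, iterate_map_add, sum_add_distrib])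
  let χ : AddChar R ℂ := (AddChar.zmodChar 4 Complex.I_pow_four).compAddMonoidHom (.mk' T hTadd)
  -- `T` is odd at some `x`, so `χ (2 * x) = -1`.
  have hχ : ∃ x, χ.mulShift γ (2 * x) ≠ 1 := by
    obtain ⟨x, hx⟩ := exists_residue_sum_iterate_ne_zero φ hφ
      ((orderOf_residue_of_odd hm (hord ▸ odd_card_residueField_sub_one)).trans hord) hr hF
    refine ⟨hγ.unit⁻¹ * x, fun h => hx ?_⟩
    rw [AddChar.mulShift_apply, show γ * (2 * (hγ.unit⁻¹ * x)) = 2 * x by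
      linear_combination (2 * x) * hγ.mul_val_inv] at h
    replace h : 2 * T x = 0 := (Complex.I_pow_val_eq_one_iff _).mp
      (by rw [two_mul, ← hTadd, ← two_mul]; exact h)
    rw [← hT, ← map_zero (residue R)]
    exact residue_eq_of_two_mul_eq (by rw [mul_zero, ← map_ofNat (ZMod.castHom (dvd_refl 4) R) 2,
      ← map_mul, h, map_zero])
  have hsum := norm_sq_one_add_sum_range_orderOf hm hord _ hχ
  rw [hξ, hF] at hsum
  push_cast at hsum
  exact ⟨hsum, norm_bounds_of_norm_one_add_sq_eq hsum⟩
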